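/- There is no n ∈ ℕ with h_n < h_{n+1} < h_{n+2} < h_{n+3}. -/

import Mathlib

def t (n : ℕ) : ℤ := (-1) ^ ((Nat.digits 2 n).sum)

def h : ℕ → ℤ
  | 0 => 0
  | 1 => 1
  | (n + 2) => t (n + 2) * h (n + 1) + h n

/-!
Since `t (2n) = t n` and `t (2n+1) = -t n`, two steps of the recurrence collapse to
`h (2n+3) = -t (n+1) * h (2n)`, and the even-indexed terms satisfy
`h (2n+4) = h (2n+2) - t (n+2) * t (n+1) * h (2n)`, where the sign is forced to be `+` when `n`
is odd. Induction over blocks of four gives `h (4m+2) ≤ h (4m) ≤ 0`, so every even-indexed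
term is nonpositive. Writing the odd-indexed terms of a run of four through the even-indexed
ones, each choice of the parity of `n` and of the sign `t (m+1)` contradicts monotonicity.
-/

lemma t_eq_one_or_neg_one (n : ℕ) : t n = 1 ∨ t n = -1 :=
  ((Nat.digits 2 n).sum.even_or_odd).imp Even.neg_one_pow Odd.neg_one_pow

lemma t_mul_self (n : ℕ) : t n * t n = 1 := by
  rcases t_eq_one_or_neg_one n with ht | ht <;> simp [ht]

lemma t_two_mul (n : ℕ) : t (2 * n) = t n := by
  rcases Nat.eq_zero_or_pos n with rfl | hn
  · rfl
  · rw [t, Nat.digits_def' one_lt_two (by omega)]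
    simp [t]

lemma t_two_mul_add_one (n : ℕ) : t (2 * n + 1) = -t n := by
  rw [t, Nat.digits_def' one_lt_two (by omega)]
  simp [t, pow_add, Nat.mul_add_div]

lemma t_two_mul_add_one_mul_t_two_mul (n : ℕ) : t (2 * n + 1) * t (2 * n) = -1 := by
  rw [t_two_mul_add_one, t_two_mul, neg_mul, t_mul_self]

lemma h_add_two (n : ℕ) : h (n + 2) = t (n + 2) * h (n + 1) + h n := rfl

lemma h_two_mul_add_two (n : ℕ) : h (2 * n + 2) = t (n + 1) * h (2 * n + 1) + h (2 * n) := by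
  rw [h_add_two, show 2 * n + 2 = 2 * (n + 1) by ring, t_two_mul]

lemma h_two_mul_add_three (n : ℕ) : h (2 * n + 3) = -t (n + 1) * h (2 * n) := by
  have hodd : t (2 * n + 3) = -t (n + 1) := by
    rw [show 2 * n + 3 = 2 * (n + 1) + 1 by ring, t_two_mul_add_one]
  rw [h_add_two, hodd, h_two_mul_add_two]
  linear_combination (-h (2 * n + 1)) * t_mul_self (n + 1)

lemma h_two_mul_add_four (n : ℕ) :
    h (2 * n + 4) = h (2 * n + 2) - t (n + 2) * t (n + 1) * h (2 * n) := by
  rw [h_add_two, show 2 * n + 4 = 2 * (n + 2) by ring, t_two_mul, h_two_mul_add_three]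
  ring

lemma h_four_mul_add_two_le_and_nonpos (m : ℕ) : h (4 * m + 2) ≤ h (4 * m) ∧ h (4 * m) ≤ 0 := by
  induction m with
  | zero => decide
  | succ m ih =>
    obtain ⟨hba, ha⟩ := ih
    have hnext : h (4 * (m + 1)) = h (4 * m + 2) - t (2 * m + 2) * t (2 * m + 1) * h (4 * m) := by
      rw [show 4 * (m + 1) = 2 * (2 * m) + 4 by ring, h_two_mul_add_four]
      ring_nf
    have hnext_succ : h (4 * (m + 1) + 2) = h (4 * (m + 1)) + h (4 * m + 2) := by
      have hsign : t (2 * m + 1 + 2) * t (2 * m + 1 + 1) = -1 :=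
        t_two_mul_add_one_mul_t_two_mul (m + 1)
      rw [show 4 * (m + 1) + 2 = 2 * (2 * m + 1) + 4 by ring, h_two_mul_add_four, hsign]
      ring_nf
    have hnext_nonpos : h (4 * (m + 1)) ≤ 0 := by
      rcases t_eq_one_or_neg_one (2 * m + 2) with hu | hu <;>
      rcases t_eq_one_or_neg_one (2 * m + 1) with hv | hv <;>
      · rw [hu, hv] at hnext; linarith
    exact ⟨by linarith, hnext_nonpos⟩

lemma h_two_mul_nonpos (n : ℕ) : h (2 * n) ≤ 0 := by
  obtain ⟨m, rfl | rfl⟩ := Nat.even_or_odd' n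
  · simpa [← mul_assoc] using (h_four_mul_add_two_le_and_nonpos m).2
  · have := h_four_mul_add_two_le_and_nonpos m
    rw [show 2 * (2 * m + 1) = 4 * m + 2 by ring]
    linarith

theorem stmt9 : ¬ ∃ n : ℕ, h n < h (n + 1) ∧ h (n + 1) < h (n + 2) ∧ h (n + 2) < h (n + 3) := by
  rintro ⟨n, h₁, h₂, h₃⟩
  obtain ⟨m, rfl | rfl⟩ := Nat.even_or_odd' n
  · have hc := h_two_mul_add_two m
    have hd := h_two_mul_add_three m
    have ha := h_two_mul_nonpos m
    rcases t_eq_one_or_neg_one (m + 1) with hv | hv <;> rw [hv] at hc hd <;> linarith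
  · have hb := h_two_mul_add_two m
    have hc := h_two_mul_add_three m
    have ha := h_two_mul_nonpos m
    have hd := h_two_mul_nonpos (m + 2)
    rw [show 2 * (m + 2) = 2 * m + 1 + 3 by ring] at hd
    rcases t_eq_one_or_neg_one (m + 1) with hv | hv <;> rw [hv] at hb hc <;> linarith
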